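/- There exists an absolute constant C > 0 such that for every finite convex set A ⊂ ℝ and every x ∈ ℝ, the number of representations r_{A+A}(x) := #{(a,b) ∈ A × A : a + b = x} satisfies r_{A+A}(x) ≤ C·|A|^{2/3}. -/

import Mathlib

/-!
Write `A = {g 0 < ⋯ < g (n - 1)}` and list the representations `x = g i + g j` with `i ≤ j` by
increasing `i = e k`; the partners `j = J k` then decrease. The index blocks `[e k, e (k + 1)]` and
`[J (k + 1), J k]` have lengths `s k`, `t k` and carry the same increment of `g`, so since chord
slopes of a convex sequence increase, `t k < s k` and `s (k + 1) * t k < s k * t (k + 1)`. Thus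
the fractions `t k / s k` increase inside `[0, 1)` in steps of at least `1 / (s k * s (k + 1))`,
while `∑ s k ≤ n`: at most `n ^ (2/3)` steps have `s k, s (k + 1) ≤ n ^ (1/3)`, and at most
`2 n ^ (2/3)` steps do not.
-/

/-- A finite set `A ⊆ ℝ` is *convex* if, listing its elements in increasing order,
the consecutive differences form a strictly increasing sequence. -/
def IsConvexSet (A : Finset ℝ) : Prop :=
  ∀ i : ℕ, i + 2 < A.card →
    (A.sort (· ≤ ·)).getD (i + 1) 0 - (A.sort (· ≤ ·)).getD i 0 <
      (A.sort (· ≤ ·)).getD (i + 2) 0 - (A.sort (· ≤ ·)).getD (i + 1) 0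

open Finset

namespace Finset

variable {α : Type*} [LinearOrder α]

theorem strictMonoOn_getD_sort (s : Finset α) (d : α) :
    StrictMonoOn (fun i => (s.sort (· ≤ ·)).getD i d) (Set.Iio #s) := by
  intro i hi j hj hij
  have hlen : (s.sort (· ≤ ·)).length = #s := s.length_sort _
  simp only [Set.mem_Iio] at hi hj
  simp only [List.getD_eq_getElem _ _ (hlen ▸ hi), List.getD_eq_getElem _ _ (hlen ▸ hj)]
  exact s.sortedLT_sort (Fin.mk_lt_mk.2 hij)

theorem getD_sort_mem (s : Finset α) (d : α) {k : ℕ} (hk : k < #s) :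
    (s.sort (· ≤ ·)).getD k d ∈ s := by
  rw [List.getD_eq_getElem _ _ (by rwa [s.length_sort])]
  exact (mem_sort _).1 (List.getElem_mem _)

theorem exists_getD_sort_eq (s : Finset α) (d : α) {a : α} (ha : a ∈ s) :
    ∃ k < #s, (s.sort (· ≤ ·)).getD k d = a := by
  obtain ⟨k, hk, rfl⟩ := List.mem_iff_getElem.1 ((mem_sort (· ≤ ·)).2 ha)
  exact ⟨k, s.length_sort (· ≤ ·) ▸ hk, List.getD_eq_getElem _ _ hk⟩

end Finset

section ConvexSequence

variable {g : ℕ → ℝ} {n : ℕ}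

theorem strictMonoOn_diff_of_lt
    (hconv : ∀ i, i + 2 < n → g (i + 1) - g i < g (i + 2) - g (i + 1)) :
    StrictMonoOn (fun i => g (i + 1) - g i) (Set.Iio (n - 1)) :=
  strictMonoOn_of_lt_add_one Set.ordConnected_Iio fun i _ _ hi =>
    hconv i (by rw [Set.mem_Iio] at hi; omega)

variable (hδ : StrictMonoOn (fun i => g (i + 1) - g i) (Set.Iio (n - 1)))
include hδ

theorem mul_diff_le_sub {i j : ℕ} (hij : i ≤ j) (hj : j < n) :
    ((j - i : ℕ) : ℝ) * (g (i + 1) - g i) ≤ g j - g i := by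
  rw [← Finset.sum_Ico_sub g hij, ← Nat.card_Ico, ← nsmul_eq_mul]
  refine card_nsmul_le_sum _ _ _ fun k hk => ?_
  rw [mem_Ico] at hk
  exact hδ.monotoneOn (Set.mem_Iio.2 (by omega)) (Set.mem_Iio.2 (by omega)) hk.1

theorem sub_le_mul_diff {i j : ℕ} (hij : i ≤ j) (hj : j + 1 < n) :
    g (j + 1) - g i ≤ ((j + 1 - i : ℕ) : ℝ) * (g (j + 1) - g j) := by
  rw [← Finset.sum_Ico_sub g (by omega : i ≤ j + 1), ← Nat.card_Ico, ← nsmul_eq_mul]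
  refine sum_le_card_nsmul _ _ _ fun k hk => ?_
  rw [mem_Ico] at hk
  exact hδ.monotoneOn (Set.mem_Iio.2 (by omega)) (Set.mem_Iio.2 (by omega)) (by omega)

theorem chord_mul_lt_chord_mul {a b c d : ℕ} (hab : a < b) (hbc : b ≤ c) (hcd : c < d)
    (hd : d < n) : (g b - g a) * ((d - c : ℕ) : ℝ) < (g d - g c) * ((b - a : ℕ) : ℝ) := by
  obtain ⟨b, rfl⟩ : ∃ b', b = b' + 1 := ⟨b - 1, by omega⟩
  have hdc : (0 : ℝ) < (d - c : ℕ) := by exact_mod_cast (by omega : 0 < d - c)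
  have hba : (0 : ℝ) < (b + 1 - a : ℕ) := by exact_mod_cast (by omega : 0 < b + 1 - a)
  have hδbc : g (b + 1) - g b < g (c + 1) - g c :=
    hδ (Set.mem_Iio.2 (by omega)) (Set.mem_Iio.2 (by omega)) (by omega)
  calc (g (b + 1) - g a) * ((d - c : ℕ) : ℝ)
      ≤ ((b + 1 - a : ℕ) : ℝ) * (g (b + 1) - g b) * (d - c : ℕ) := by
        gcongr; exact sub_le_mul_diff hδ (by omega) (by omega)
    _ < ((b + 1 - a : ℕ) : ℝ) * (g (c + 1) - g c) * (d - c : ℕ) := by gcongr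
    _ ≤ (g d - g c) * ((b + 1 - a : ℕ) : ℝ) := by
        rw [mul_assoc, mul_comm]; gcongr; linarith [mul_diff_le_sub hδ hcd.le hd]

end ConvexSequence

theorem sum_range_tsub_add_of_le {e : ℕ → ℕ} {m : ℕ} (he : ∀ k < m, e k ≤ e (k + 1)) :
    ∑ k ∈ range m, (e (k + 1) - e k) + e 0 = e m := by
  induction m with
  | zero => simp
  | succ m ih =>
    have := ih fun k hk => he k (by omega)
    have := he m (by omega)
    rw [sum_range_succ]; omega

theorem one_le_sq_mul_add_div {a b δ τ : ℝ} (ha : 0 < a) (hb : 0 < b) (hτ : 0 < τ)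
    (h : 1 ≤ a * b * δ) : 1 ≤ τ ^ 2 * δ + (a + b) / τ := by
  have hδ : 0 ≤ δ := by
    by_contra! hneg
    nlinarith [mul_pos ha hb]
  by_cases hsmall : a ≤ τ ∧ b ≤ τ
  · have : a * b ≤ τ ^ 2 := by nlinarith
    have : 0 ≤ (a + b) / τ := by positivity
    nlinarith
  · have : τ < a + b := by
      by_contra! hle
      exact hsmall ⟨by linarith, by linarith⟩
    have : 1 < (a + b) / τ := by rwa [one_lt_div hτ]
    nlinarith [mul_nonneg (sq_nonneg τ) hδ]

theorem le_three_mul_rpow_of_mul_lt_mul {s t : ℕ → ℕ} {M n : ℕ} (hs : ∀ k ≤ M, 0 < s k)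
    (hts : ∀ k ≤ M, t k < s k) (hcross : ∀ k < M, s (k + 1) * t k < s k * t (k + 1))
    (hsum : ∑ k ∈ range (M + 1), s k ≤ n) :
    (M : ℝ) ≤ 3 * (n : ℝ) ^ (2 / 3 : ℝ) := by
  have hn : (0 : ℝ) < n := by
    have := single_le_sum (fun k _ => Nat.zero_le (s k)) (mem_range.2 (Nat.succ_pos M))
    exact_mod_cast (hs 0 (Nat.zero_le M)).trans_le (this.trans hsum)
  set τ : ℝ := (n : ℝ) ^ (1 / 3 : ℝ)
  have hτ : 0 < τ := by positivity
  set σ : ℕ → ℝ := fun k => (t k : ℝ) / s k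
  have hstep : ∀ k < M, 1 ≤ τ ^ 2 * (σ (k + 1) - σ k) + ((s k : ℝ) + s (k + 1)) / τ := by
    intro k hk
    have h0 : (0 : ℝ) < s k := by exact_mod_cast hs k hk.le
    have h1 : (0 : ℝ) < s (k + 1) := by exact_mod_cast hs (k + 1) hk
    refine one_le_sq_mul_add_div h0 h1 hτ ?_
    have : (s (k + 1) * t k + 1 : ℝ) ≤ s k * t (k + 1) := by exact_mod_cast hcross k hk
    calc (1 : ℝ) ≤ s k * t (k + 1) - s (k + 1) * t k := by linarith
      _ = s k * s (k + 1) * (σ (k + 1) - σ k) := by simp only [σ]; field_simp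
  have hσ : σ M - σ 0 ≤ 1 := by
    have hM : σ M < 1 :=
      (div_lt_one (by exact_mod_cast hs M le_rfl)).2 (by exact_mod_cast hts M le_rfl)
    have h0 : 0 ≤ σ 0 := by positivity
    linarith
  have hsum_pairs : ∑ k ∈ range M, ((s k : ℝ) + s (k + 1)) ≤ 2 * n := by
    have hsumℝ : ∑ k ∈ range (M + 1), (s k : ℝ) ≤ n := by exact_mod_cast hsum
    have hlast := sum_range_succ (fun k => (s k : ℝ)) M
    have hfirst := sum_range_succ' (fun k => (s k : ℝ)) M
    have h0 : (0 : ℝ) ≤ s 0 := by positivity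
    have hM : (0 : ℝ) ≤ s M := by positivity
    rw [sum_add_distrib]
    linarith
  have hτn : τ ^ 2 + 2 * n / τ = 3 * (n : ℝ) ^ (2 / 3 : ℝ) := by
    have h2 : τ ^ 2 = (n : ℝ) ^ (2 / 3 : ℝ) := by
      rw [← Real.rpow_natCast, ← Real.rpow_mul hn.le]; norm_num
    have h3 : (n : ℝ) = (n : ℝ) ^ (2 / 3 : ℝ) * τ := by
      rw [← Real.rpow_add hn]; norm_num
    rw [h2]; nth_rewrite 2 [h3]; field_simp; ring
  calc (M : ℝ) = ∑ k ∈ range M, (1 : ℝ) := by simp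
    _ ≤ ∑ k ∈ range M, (τ ^ 2 * (σ (k + 1) - σ k) + ((s k : ℝ) + s (k + 1)) / τ) :=
        sum_le_sum fun k hk => hstep k (mem_range.1 hk)
    _ = τ ^ 2 * (σ M - σ 0) + (∑ k ∈ range M, ((s k : ℝ) + s (k + 1))) / τ := by
        rw [sum_add_distrib, ← mul_sum, sum_range_sub, sum_div]
    _ ≤ τ ^ 2 * 1 + 2 * n / τ := by gcongr
    _ = 3 * (n : ℝ) ^ (2 / 3 : ℝ) := by rw [mul_one, hτn]

theorem length_le_of_forall_add_eq {g : ℕ → ℝ} {n m : ℕ} {x : ℝ} {e J : ℕ → ℕ}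
    (hg : StrictMonoOn g (Set.Iio n))
    (hδ : StrictMonoOn (fun i => g (i + 1) - g i) (Set.Iio (n - 1)))
    (he : ∀ k, k + 1 < m → e k < e (k + 1)) (heJ : ∀ k < m, e k ≤ J k) (hJ : ∀ k < m, J k < n)
    (hx : ∀ k < m, g (e k) + g (J k) = x) :
    (m : ℝ) ≤ 3 * (n : ℝ) ^ (2 / 3 : ℝ) + 2 := by
  rcases lt_or_ge m 2 with hm | hm
  · have : (m : ℝ) ≤ 2 := by exact_mod_cast hm.le
    linarith [show (0 : ℝ) ≤ 3 * (n : ℝ) ^ (2 / 3 : ℝ) by positivity]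
  obtain ⟨M, rfl⟩ := Nat.exists_eq_add_of_le' hm
  have hen : ∀ k < M + 2, e k < n := fun k hk => (heJ k hk).trans_lt (hJ k hk)
  have hge : ∀ k, k + 1 < M + 2 → g (e k) < g (e (k + 1)) := fun k hk =>
    hg (hen k (by omega)) (hen (k + 1) hk) (he k hk)
  have hJanti : ∀ k, k + 1 < M + 2 → J (k + 1) < J k := fun k hk =>
    (hg.lt_iff_lt (hJ (k + 1) hk) (hJ k (by omega))).1
      (by linarith [hx k (by omega), hx (k + 1) hk, hge k hk])
  set u : ℕ → ℝ := fun k => g (e (k + 1)) - g (e k)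
  have hu : ∀ k, k + 1 < M + 2 → g (J k) - g (J (k + 1)) = u k := fun k hk => by
    linarith [hx k (by omega), hx (k + 1) hk]
  have hupos : ∀ k, k + 1 < M + 2 → 0 < u k := fun k hk => sub_pos.2 (hge k hk)
  set s : ℕ → ℕ := fun k => e (k + 1) - e k
  set t : ℕ → ℕ := fun k => J k - J (k + 1)
  have hs : ∀ k ≤ M, 0 < s k := fun k hk => Nat.sub_pos_of_lt (he k (by omega))
  have hts : ∀ k ≤ M, t k < s k := fun k hk => by
    have := chord_mul_lt_chord_mul hδ (he k (by omega)) (heJ (k + 1) (by omega))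
      (hJanti k (by omega)) (hJ k (by omega))
    rw [hu k (by omega)] at this
    exact_mod_cast lt_of_mul_lt_mul_left this (hupos k (by omega)).le
  have hcross : ∀ k < M, s (k + 1) * t k < s k * t (k + 1) := fun k hk => by
    have hleft := chord_mul_lt_chord_mul hδ (he k (by omega)) le_rfl (he (k + 1) (by omega))
      (hen (k + 2) (by omega))
    have hright := chord_mul_lt_chord_mul hδ (hJanti (k + 1) (by omega)) le_rfl
      (hJanti k (by omega)) (hJ k (by omega))
    rw [hu k (by omega), hu (k + 1) (by omega)] at hright
    have h0 := hupos k (by omega)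
    have h1 := hupos (k + 1) (by omega)
    have := mul_lt_mul'' hleft hright (by positivity) (by positivity)
    have : u k * u (k + 1) * (s (k + 1) * t k : ℝ) < u k * u (k + 1) * (s k * t (k + 1) : ℝ) :=
      by linarith
    exact_mod_cast lt_of_mul_lt_mul_left this (by positivity)
  have hsum : ∑ k ∈ range (M + 1), s k ≤ n := by
    have := sum_range_tsub_add_of_le fun k (hk : k < M + 1) => (he k (by omega)).le
    have := hen (M + 1) (by omega)
    simp only [s]
    omega
  have := le_three_mul_rpow_of_mul_lt_mul hs hts hcross hsum
  push_cast
  linarith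

theorem card_le_of_forall_exists_add_eq {g : ℕ → ℝ} {n : ℕ} {x : ℝ}
    (hg : StrictMonoOn g (Set.Iio n))
    (hδ : StrictMonoOn (fun i => g (i + 1) - g i) (Set.Iio (n - 1))) (I : Finset ℕ)
    (hI : ∀ i ∈ I, ∃ j, i ≤ j ∧ j < n ∧ g i + g j = x) :
    (#I : ℝ) ≤ 5 * (n : ℝ) ^ (2 / 3 : ℝ) := by
  rcases I.eq_empty_or_nonempty with rfl | ⟨i, hi⟩
  · simp only [card_empty, CharP.cast_eq_zero]; positivity
  choose! J hJ using hI
  set e : ℕ → ℕ := fun k => (I.sort (· ≤ ·)).getD k 0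
  have heI : ∀ k < #I, e k ∈ I := fun k hk => I.getD_sort_mem 0 hk
  have hlen := length_le_of_forall_add_eq (m := #I) (e := e) (J := J ∘ e) hg hδ
    (fun k hk => I.strictMonoOn_getD_sort 0 (Set.mem_Iio.2 (by omega)) (Set.mem_Iio.2 hk)
      (by omega))
    (fun k hk => (hJ _ (heI k hk)).1) (fun k hk => (hJ _ (heI k hk)).2.1)
    (fun k hk => (hJ _ (heI k hk)).2.2)
  have hn : (1 : ℝ) ≤ n := by
    exact_mod_cast Nat.one_le_of_lt ((hJ i hi).1.trans_lt (hJ i hi).2.1)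
  have := Real.one_le_rpow hn (by norm_num : (0 : ℝ) ≤ 2 / 3)
  linarith

theorem card_filter_add_eq_le {α : Type*} [AddCommGroup α] [LinearOrder α] [IsOrderedAddMonoid α]
    (A : Finset α) (x : α) :
    #{p ∈ A ×ˢ A | p.1 + p.2 = x} ≤ 2 * #{a ∈ A | x - a ∈ A ∧ a ≤ x - a} := by
  calc #{p ∈ A ×ˢ A | p.1 + p.2 = x}
      ≤ #({p ∈ A ×ˢ A | p.1 + p.2 = x ∧ p.1 ≤ p.2} ∪
          {p ∈ A ×ˢ A | p.1 + p.2 = x ∧ p.2 ≤ p.1}) := by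
        refine card_le_card fun p hp => ?_
        simp only [mem_union, mem_filter] at hp ⊢
        rcases le_total p.1 p.2 with h | h <;> simp [hp, h]
    _ ≤ #{a ∈ A | x - a ∈ A ∧ a ≤ x - a} + #{a ∈ A | x - a ∈ A ∧ a ≤ x - a} := by
        refine (card_union_le _ _).trans (add_le_add ?_ ?_)
        · refine card_le_card_of_injOn Prod.fst (fun p hp => ?_) fun p hp q hq hpq => ?_
          · simp only [mem_coe, mem_filter, mem_product] at hp ⊢
            obtain ⟨⟨h1, h2⟩, hx, hle⟩ := hp
            rw [← hx]; simp [h1, h2, hle]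
          · simp only [mem_coe, mem_filter] at hp hq
            exact Prod.ext hpq (add_left_cancel (by rw [hp.2.1, hpq, hq.2.1]))
        · refine card_le_card_of_injOn Prod.snd (fun p hp => ?_) fun p hp q hq hpq => ?_
          · simp only [mem_coe, mem_filter, mem_product] at hp ⊢
            obtain ⟨⟨h1, h2⟩, hx, hle⟩ := hp
            rw [← hx]; simp [h1, h2, hle]
          · simp only [mem_coe, mem_filter] at hp hq
            exact Prod.ext (add_right_cancel (by rw [hp.2.1, hpq, hq.2.1])) hpq
    _ = 2 * #{a ∈ A | x - a ∈ A ∧ a ≤ x - a} := (two_mul _).symm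

/-- For every convex set `A ⊆ ℝ` and every `x ∈ ℝ`, the number of representations
`r_{A+A}(x) = #{(a,b) ∈ A × A : a + b = x}` is at most `C·|A|^{2/3}`. -/
theorem rep_count_upper_bound :
    ∃ C : ℝ, 0 < C ∧ ∀ A : Finset ℝ, IsConvexSet A → ∀ x : ℝ,
      (((A ×ˢ A).filter fun p => p.1 + p.2 = x).card : ℝ) ≤
        C * (A.card : ℝ) ^ (2 / 3 : ℝ) := by
  classical
  refine ⟨10, by norm_num, fun A hA x => ?_⟩
  set g : ℕ → ℝ := fun i => (A.sort (· ≤ ·)).getD i 0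
  have hg : StrictMonoOn g (Set.Iio #A) := A.strictMonoOn_getD_sort 0
  set I := {i ∈ range #A | ∃ j, i ≤ j ∧ j < #A ∧ g i + g j = x}
  have hS : {a ∈ A | x - a ∈ A ∧ a ≤ x - a} ⊆ I.image g := by
    intro a ha
    obtain ⟨haA, hxa, hle⟩ := mem_filter.1 ha
    obtain ⟨i, hi, rfl⟩ := A.exists_getD_sort_eq 0 haA
    obtain ⟨j, hj, hgj⟩ := A.exists_getD_sort_eq 0 hxa
    refine mem_image.2 ⟨i, mem_filter.2 ⟨mem_range.2 hi, j, ?_, hj, ?_⟩, rfl⟩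
    · exact (hg.le_iff_le hi hj).1 (hle.trans_eq hgj.symm)
    · simp only [g, hgj]; ring
  calc (#{p ∈ A ×ˢ A | p.1 + p.2 = x} : ℝ)
      ≤ 2 * #{a ∈ A | x - a ∈ A ∧ a ≤ x - a} := by exact_mod_cast card_filter_add_eq_le A x
    _ ≤ 2 * #I := by gcongr; exact (card_le_card hS).trans card_image_le
    _ ≤ 2 * (5 * (#A : ℝ) ^ (2 / 3 : ℝ)) := by
        gcongr
        exact card_le_of_forall_exists_add_eq hg (strictMonoOn_diff_of_lt hA) I
          fun i hi => (mem_filter.1 hi).2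
    _ = 10 * (#A : ℝ) ^ (2 / 3 : ℝ) := by ring
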